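/- arXiv:2308.11016 — 3 statements merged into one kernel-verified Lean document; each statement's English description precedes it below -/
import Mathlib

section
/- The forward shift S is bounded on the Hardy space H^p(T) if and only if the set {K(1,n-1)·γ(n-1)/γ(n) : n ∈ ℕ} is bounded, and in that case ‖S‖ = (sup_n K(1,n-1)·γ(n-1)/γ(n))^{1/p}. -/
open scoped BigOperators
open Classical

/-- An infinite, locally finite rooted tree, presented combinatorially via a
parent function and a level (distance-to-root) function.  Every level is a
finite nonempty set of vertices. -/
structure HTree where
  V : Type
  root : V
  parent : V → V
  level : V → ℕ
  level_root : level root = 0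
  root_of_level_zero : ∀ v, level v = 0 → v = root
  level_parent : ∀ v, v ≠ root → level (parent v) + 1 = level v
  finite_level : ∀ n : ℕ, {v : V | level v = n}.Finite
  nonempty_level : ∀ n : ℕ, {v : V | level v = n}.Nonempty

namespace HTree

variable (T : HTree)

/-- The finite set of vertices at level `n`. -/
noncomputable def levelFinset (n : ℕ) : Finset T.V := (T.finite_level n).toFinset

/-- `γ(n)`, the number of vertices at level `n`. -/
noncomputable def gamma (n : ℕ) : ℕ := (T.levelFinset n).card

/-- The set of `m`-children of a vertex `v`. -/
noncomputable def nChildrenFinset (m : ℕ) (v : T.V) : Finset T.V :=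
  (T.levelFinset (T.level v + m)).filter (fun w => T.parent^[m] w = v)

/-- `γ(m,v)`, the number of `m`-children of `v`. -/
noncomputable def numNChildren (m : ℕ) (v : T.V) : ℕ := (T.nChildrenFinset m v).card

/-- The set of children of a vertex. -/
noncomputable def childrenFinset (v : T.V) : Finset T.V := T.nChildrenFinset 1 v

/-- `γ(1,v)`, the number of children of `v`. -/
noncomputable def numChildren (v : T.V) : ℕ := T.numNChildren 1 v

/-- `K(m,r)`, the maximal number of `m`-children among vertices at level `r`. -/
noncomputable def K (m r : ℕ) : ℕ := (T.levelFinset r).sup (fun v => T.numNChildren m v)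

/-- `M_p^p(n,f)`, the `p`-th power of the `p`-th mean of `|f|` over level `n`. -/
noncomputable def Mpp (p : ℝ) (f : T.V → ℂ) (n : ℕ) : ℝ :=
  (1 / (T.gamma n : ℝ)) * ∑ v ∈ T.levelFinset n, ‖f v‖ ^ p

/-- `M_p(n,f)`, the `p`-th mean of `|f|` over level `n`. -/
noncomputable def Mp (p : ℝ) (f : T.V → ℂ) (n : ℕ) : ℝ := (T.Mpp p f n) ^ (1 / p)

/-- Membership in the Hardy space `H^p(T)`. -/
def MemHp (p : ℝ) (f : T.V → ℂ) : Prop := ∃ C : ℝ, ∀ n : ℕ, T.Mp p f n ≤ C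

/-- Membership in the little Hardy space `H^p_0(T)`. -/
def MemHp0 (p : ℝ) (f : T.V → ℂ) : Prop :=
  Filter.Tendsto (T.Mp p f) Filter.atTop (nhds 0)

/-- The `H^p` norm, `sup_n M_p(n,f)`. -/
noncomputable def Hnorm (p : ℝ) (f : T.V → ℂ) : ℝ := ⨆ n : ℕ, T.Mp p f n

/-- The forward shift `(Sf)(v) = f(parent v)`, `(Sf)(root) = 0`. -/
noncomputable def S (f : T.V → ℂ) : T.V → ℂ := fun v => if v = T.root then 0 else f (T.parent v)

/-- The backward shift `(Bf)(v) = Σ_{w child of v} f(w)`. -/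
noncomputable def B (f : T.V → ℂ) : T.V → ℂ := fun v => ∑ w ∈ T.childrenFinset v, f w

/-- An operator `A` is bounded on the subspace described by `Mem`, with the
`H^p` norm. -/
def BoundedOn (A : (T.V → ℂ) → (T.V → ℂ)) (Mem : (T.V → ℂ) → Prop) (p : ℝ) : Prop :=
  ∃ C : ℝ, 0 ≤ C ∧ ∀ f, Mem f → Mem (A f) ∧ T.Hnorm p (A f) ≤ C * T.Hnorm p f

/-- The operator norm of `A` on the subspace described by `Mem`. -/
noncomputable def opNorm (A : (T.V → ℂ) → (T.V → ℂ)) (Mem : (T.V → ℂ) → Prop) (p : ℝ) : ℝ :=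
  sInf {C : ℝ | 0 ≤ C ∧ ∀ f, Mem f → Mem (A f) ∧ T.Hnorm p (A f) ≤ C * T.Hnorm p f}

/-- Hypercyclicity of an operator `A` on the subspace described by `Mem`. -/
def Hypercyclic (A : (T.V → ℂ) → (T.V → ℂ)) (Mem : (T.V → ℂ) → Prop) (p : ℝ) : Prop :=
  ∃ f, Mem f ∧ ∀ g, Mem g → ∀ ε : ℝ, 0 < ε →
    ∃ N : ℕ, T.Hnorm p (fun v => A^[N] f v - g v) < ε

end HTree

/-!
Every vertex at level `n + 1` carries the value of its parent under `S`, so level `n + 1` of `S f`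
sees each `w` at level `n` with multiplicity `γ(1,w) ≤ K(1,n)`; hence
`M_p^p(n+1, Sf) ≤ K(1,n) γ(n)/γ(n+1) · M_p^p(n, f)`. The indicator `χ` of a vertex at level `n`
with `K(1,n)` children has `‖χ‖^p = 1/γ(n)` and `M_p^p(n+1, Sχ) = K(1,n)/γ(n+1)`, so the
admissible constants `C` for `S` are exactly those with `K(1,n) γ(n)/γ(n+1) ≤ C^p` for all `n`.
-/

open Finset

lemma rpow_pow_mul_rpow_one_div {C x p : ℝ} (hC : 0 ≤ C) (hx : 0 ≤ x) (hp : p ≠ 0) :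
    (C ^ p * x) ^ (1 / p) = C * x ^ (1 / p) := by
  rw [Real.mul_rpow (Real.rpow_nonneg hC p) hx, one_div, Real.rpow_rpow_inv hC hp]

lemma rpow_one_div_ciSup_le_iff {ι : Type*} [Nonempty ι] {c : ι → ℝ} (hc : ∀ i, 0 ≤ c i)
    (hb : BddAbove (Set.range c)) {p C : ℝ} (hp : 0 < p) :
    (⨆ i, c i) ^ (1 / p) ≤ C ↔ 0 ≤ C ∧ ∀ i, c i ≤ C ^ p := by
  have hsup : 0 ≤ ⨆ i, c i := Real.iSup_nonneg hc
  rw [one_div]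
  constructor
  · intro h
    have hC : 0 ≤ C := (Real.rpow_nonneg hsup _).trans h
    have hle := (Real.rpow_inv_le_iff_of_pos hsup hC hp).1 h
    exact ⟨hC, fun i => (le_ciSup hb i).trans hle⟩
  · rintro ⟨hC, h⟩
    exact (Real.rpow_inv_le_iff_of_pos hsup hC hp).2 (ciSup_le h)

namespace HTree

variable (T : HTree)

lemma mem_levelFinset {n : ℕ} {v : T.V} : v ∈ T.levelFinset n ↔ T.level v = n := by
  simp [levelFinset]

lemma gamma_pos (n : ℕ) : 0 < T.gamma n := by
  obtain ⟨v, hv⟩ := T.nonempty_level n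
  exact card_pos.2 ⟨v, T.mem_levelFinset.2 hv⟩

lemma ne_root_of_level_eq_succ {v : T.V} {n : ℕ} (h : T.level v = n + 1) : v ≠ T.root := by
  rintro rfl
  rw [T.level_root] at h
  omega

lemma parent_mem_levelFinset {n : ℕ} {v : T.V} (hv : v ∈ T.levelFinset (n + 1)) :
    T.parent v ∈ T.levelFinset n := by
  rw [T.mem_levelFinset] at hv ⊢
  have := T.level_parent v (T.ne_root_of_level_eq_succ hv)
  omega

lemma numChildren_eq_card_filter {n : ℕ} {w : T.V} (hw : T.level w = n) :
    T.numChildren w = #{v ∈ T.levelFinset (n + 1) | T.parent v = w} := by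
  simp [numChildren, numNChildren, nChildrenFinset, hw]

lemma sum_levelFinset_succ_comp_parent (φ : T.V → ℝ) (n : ℕ) :
    ∑ v ∈ T.levelFinset (n + 1), φ (T.parent v)
      = ∑ w ∈ T.levelFinset n, (T.numChildren w : ℝ) * φ w := by
  rw [← sum_fiberwise_of_maps_to (fun v hv => T.parent_mem_levelFinset hv)]
  refine sum_congr rfl fun w hw => ?_
  rw [sum_congr rfl fun v hv => by rw [(mem_filter.1 hv).2], sum_const, nsmul_eq_mul,
    T.numChildren_eq_card_filter (T.mem_levelFinset.1 hw)]

lemma S_apply_of_mem_levelFinset_succ (f : T.V → ℂ) {n : ℕ} {v : T.V}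
    (hv : v ∈ T.levelFinset (n + 1)) : T.S f v = f (T.parent v) :=
  if_neg (T.ne_root_of_level_eq_succ (T.mem_levelFinset.1 hv))

lemma Mpp_S_succ (p : ℝ) (f : T.V → ℂ) (n : ℕ) :
    T.Mpp p (T.S f) (n + 1)
      = 1 / (T.gamma (n + 1) : ℝ) * ∑ w ∈ T.levelFinset n, (T.numChildren w : ℝ) * ‖f w‖ ^ p := by
  rw [Mpp, ← T.sum_levelFinset_succ_comp_parent (fun w => ‖f w‖ ^ p)]
  congr 1
  exact sum_congr rfl fun v hv => by rw [T.S_apply_of_mem_levelFinset_succ f hv]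

lemma Mp_S_zero {p : ℝ} (hp : p ≠ 0) (f : T.V → ℂ) : T.Mp p (T.S f) 0 = 0 := by
  have hzero : ∀ v ∈ T.levelFinset 0, ‖T.S f v‖ ^ p = 0 := fun v hv => by
    simp [S, T.root_of_level_zero v (T.mem_levelFinset.1 hv), Real.zero_rpow hp]
  rw [Mp, Mpp, sum_eq_zero hzero, mul_zero, Real.zero_rpow (one_div_ne_zero hp)]

lemma Mpp_nonneg (p : ℝ) (f : T.V → ℂ) (n : ℕ) : 0 ≤ T.Mpp p f n := by
  unfold Mpp
  positivity

lemma Mp_nonneg (p : ℝ) (f : T.V → ℂ) (n : ℕ) : 0 ≤ T.Mp p f n :=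
  Real.rpow_nonneg (T.Mpp_nonneg p f n) _

lemma memHp_iff_bddAbove {p : ℝ} {f : T.V → ℂ} :
    T.MemHp p f ↔ BddAbove (Set.range (T.Mp p f)) := by
  simp [MemHp, bddAbove_def]

lemma Hnorm_nonneg (p : ℝ) (f : T.V → ℂ) : 0 ≤ T.Hnorm p f :=
  Real.iSup_nonneg (T.Mp_nonneg p f)

lemma Mp_le_Hnorm {p : ℝ} {f : T.V → ℂ} (hf : T.MemHp p f) (n : ℕ) : T.Mp p f n ≤ T.Hnorm p f :=
  le_ciSup (T.memHp_iff_bddAbove.1 hf) n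

noncomputable def shiftRatio (n : ℕ) : ℝ := (T.K 1 n : ℝ) * (T.gamma n : ℝ) / (T.gamma (n + 1) : ℝ)

lemma shiftRatio_nonneg (n : ℕ) : 0 ≤ T.shiftRatio n := by
  unfold shiftRatio
  positivity

lemma Mpp_S_succ_le (p : ℝ) (f : T.V → ℂ) (n : ℕ) :
    T.Mpp p (T.S f) (n + 1) ≤ T.shiftRatio n * T.Mpp p f n := by
  have hγ : (0 : ℝ) < T.gamma n := by exact_mod_cast T.gamma_pos n
  have hchildren : ∑ w ∈ T.levelFinset n, (T.numChildren w : ℝ) * ‖f w‖ ^ p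
      ≤ ∑ w ∈ T.levelFinset n, (T.K 1 n : ℝ) * ‖f w‖ ^ p :=
    sum_le_sum fun w hw => by
      gcongr
      exact_mod_cast le_sup (f := fun v => T.numNChildren 1 v) hw
  calc T.Mpp p (T.S f) (n + 1)
      ≤ 1 / (T.gamma (n + 1) : ℝ) * ∑ w ∈ T.levelFinset n, (T.K 1 n : ℝ) * ‖f w‖ ^ p := by
        rw [T.Mpp_S_succ]
        gcongr
    _ = T.shiftRatio n * T.Mpp p f n := by
        rw [shiftRatio, Mpp, ← mul_sum]
        field_simp

lemma Mp_S_le {p C : ℝ} (hp : 0 < p) (hC : 0 ≤ C) (hratio : ∀ n, T.shiftRatio n ≤ C ^ p)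
    {f : T.V → ℂ} (hf : T.MemHp p f) (n : ℕ) : T.Mp p (T.S f) n ≤ C * T.Hnorm p f := by
  cases n with
  | zero =>
    rw [T.Mp_S_zero hp.ne']
    exact mul_nonneg hC (T.Hnorm_nonneg p f)
  | succ n =>
    calc T.Mp p (T.S f) (n + 1) ≤ (C ^ p * T.Mpp p f n) ^ (1 / p) := by
          refine Real.rpow_le_rpow (T.Mpp_nonneg p _ _) ?_ (by positivity)
          exact (T.Mpp_S_succ_le p f n).trans
            (mul_le_mul_of_nonneg_right (hratio n) (T.Mpp_nonneg p f n))
      _ = C * T.Mp p f n := rpow_pow_mul_rpow_one_div hC (T.Mpp_nonneg p f n) hp.ne'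
      _ ≤ C * T.Hnorm p f := mul_le_mul_of_nonneg_left (T.Mp_le_Hnorm hf n) hC

lemma S_bound_of_shiftRatio_le {p C : ℝ} (hp : 0 < p) (hC : 0 ≤ C)
    (hratio : ∀ n, T.shiftRatio n ≤ C ^ p) {f : T.V → ℂ} (hf : T.MemHp p f) :
    T.MemHp p (T.S f) ∧ T.Hnorm p (T.S f) ≤ C * T.Hnorm p f :=
  ⟨⟨_, T.Mp_S_le hp hC hratio hf⟩, ciSup_le (T.Mp_S_le hp hC hratio hf)⟩

lemma Mpp_single_le {p : ℝ} (hp : p ≠ 0) (v : T.V) (m : ℕ) :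
    T.Mpp p (Pi.single v 1) m ≤ 1 / (T.gamma (T.level v) : ℝ) := by
  have hnorm : ∀ w, ‖(Pi.single v 1 : T.V → ℂ) w‖ ^ p = (Pi.single v 1 : T.V → ℝ) w := fun w => by
    rcases eq_or_ne w v with rfl | hw <;> simp [*, Real.zero_rpow hp]
  simp only [Mpp, hnorm, sum_pi_single', T.mem_levelFinset]
  split_ifs with hv
  · rw [hv, mul_one]
  · rw [mul_zero]
    positivity

lemma Mpp_S_single_succ {p : ℝ} (hp : p ≠ 0) (v : T.V) :
    T.Mpp p (T.S (Pi.single v 1)) (T.level v + 1)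
      = (T.numChildren v : ℝ) / (T.gamma (T.level v + 1) : ℝ) := by
  rw [T.Mpp_S_succ, sum_eq_single_of_mem v (T.mem_levelFinset.2 rfl)
    fun w _ hw => by simp [hw, Real.zero_rpow hp]]
  simp [div_eq_inv_mul]

lemma shiftRatio_le_of_S_bound {p C : ℝ} (hp : 0 < p) (hC : 0 ≤ C)
    (hS : ∀ f, T.MemHp p f → T.MemHp p (T.S f) ∧ T.Hnorm p (T.S f) ≤ C * T.Hnorm p f) (n : ℕ) :
    T.shiftRatio n ≤ C ^ p := by
  obtain ⟨v, hv, hK⟩ := exists_mem_eq_sup (T.levelFinset n)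
    ((T.nonempty_level n).elim fun v hv => ⟨v, T.mem_levelFinset.2 hv⟩) (T.numNChildren 1)
  have hlevel := T.mem_levelFinset.1 hv
  have hγ : (0 : ℝ) < T.gamma n := by exact_mod_cast T.gamma_pos n
  have hMp : ∀ m, T.Mp p (Pi.single v 1) m ≤ (1 / (T.gamma n : ℝ)) ^ (1 / p) := fun m => by
    rw [← hlevel]
    exact Real.rpow_le_rpow (T.Mpp_nonneg _ _ _) (T.Mpp_single_le hp.ne' v m) (by positivity)
  obtain ⟨hmem, hbound⟩ := hS _ ⟨_, hMp⟩
  have key : ((T.K 1 n : ℝ) / T.gamma (n + 1)) ^ (1 / p)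
      ≤ (C ^ p * (1 / (T.gamma n : ℝ))) ^ (1 / p) := by
    calc ((T.K 1 n : ℝ) / T.gamma (n + 1)) ^ (1 / p) = T.Mp p (T.S (Pi.single v 1)) (n + 1) := by
          rw [Mp, ← hlevel, T.Mpp_S_single_succ hp.ne', hlevel, K, hK, numChildren]
      _ ≤ T.Hnorm p (T.S (Pi.single v 1)) := T.Mp_le_Hnorm hmem _
      _ ≤ C * T.Hnorm p (Pi.single v 1) := hbound
      _ ≤ C * (1 / (T.gamma n : ℝ)) ^ (1 / p) := mul_le_mul_of_nonneg_left (ciSup_le hMp) hC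
      _ = (C ^ p * (1 / (T.gamma n : ℝ))) ^ (1 / p) :=
          (rpow_pow_mul_rpow_one_div hC (by positivity) hp.ne').symm
  rw [Real.rpow_le_rpow_iff (by positivity) (by positivity) (by positivity)] at key
  calc T.shiftRatio n = (T.K 1 n : ℝ) / T.gamma (n + 1) * T.gamma n := by rw [shiftRatio]; ring
    _ ≤ C ^ p * (1 / T.gamma n) * T.gamma n := by gcongr
    _ = C ^ p := by field_simp

lemma S_bound_iff {p C : ℝ} (hp : 0 < p) (hC : 0 ≤ C) :
    (∀ f, T.MemHp p f → T.MemHp p (T.S f) ∧ T.Hnorm p (T.S f) ≤ C * T.Hnorm p f) ↔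
      ∀ n, T.shiftRatio n ≤ C ^ p :=
  ⟨T.shiftRatio_le_of_S_bound hp hC, fun h _ => T.S_bound_of_shiftRatio_le hp hC h⟩

end HTree

/-- boundedness and norm of the forward shift on `H^p(T)`. -/
theorem forward_shift_bounded_Hp (T : HTree) (p : ℝ) (hp : 1 ≤ p) :
    (T.BoundedOn T.S (T.MemHp p) p ↔
      BddAbove (Set.range fun n : ℕ =>
        (T.K 1 n : ℝ) * (T.gamma n : ℝ) / (T.gamma (n + 1) : ℝ))) ∧
    (T.BoundedOn T.S (T.MemHp p) p →
      T.opNorm T.S (T.MemHp p) p =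
        (⨆ n : ℕ, (T.K 1 n : ℝ) * (T.gamma n : ℝ) / (T.gamma (n + 1) : ℝ)) ^ (1 / p)) := by
  have hp0 : 0 < p := by linarith
  have admissible : ∀ C, (0 ≤ C ∧ ∀ f, T.MemHp p f → T.MemHp p (T.S f) ∧
      T.Hnorm p (T.S f) ≤ C * T.Hnorm p f) ↔ 0 ≤ C ∧ ∀ n, T.shiftRatio n ≤ C ^ p :=
    fun C => and_congr_right fun hC => T.S_bound_iff hp0 hC
  have hsup_iff (hb : BddAbove (Set.range T.shiftRatio)) (C : ℝ) :=
    rpow_one_div_ciSup_le_iff T.shiftRatio_nonneg hb (C := C) hp0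
  have hbounded : T.BoundedOn T.S (T.MemHp p) p ↔ BddAbove (Set.range T.shiftRatio) := by
    simp only [HTree.BoundedOn, admissible]
    refine ⟨fun ⟨C, _, hC⟩ => ⟨C ^ p, Set.forall_mem_range.2 hC⟩, fun hb => ?_⟩
    exact ⟨_, (hsup_iff hb _).1 le_rfl⟩
  refine ⟨hbounded, fun hS => ?_⟩
  have hset : {C | 0 ≤ C ∧ ∀ f, T.MemHp p f → T.MemHp p (T.S f) ∧
      T.Hnorm p (T.S f) ≤ C * T.Hnorm p f} = Set.Ici ((⨆ n, T.shiftRatio n) ^ (1 / p)) := by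
    ext C
    rw [Set.mem_ofPred_eq, admissible, Set.mem_Ici, hsup_iff (hbounded.1 hS)]
  exact (congrArg sInf hset).trans csInf_Ici
end

section
/- If the tree T has a leaf, the point spectrum of the forward shift S equals {0}; if T is leafless, S has no eigenvalues (as an operator on H^p(T) or H^p_0(T)). -/
open scoped BigOperators
open Classical

/-!
A nonzero eigenvalue `z` forces `f = 0` level by level: `z * f root = (S f) root = 0`, and
`z * f v = f (parent v)` propagates vanishing down the tree. For `z = 0` the equation reads
`f (parent u) = 0` for every `u ≠ root`, so `f` vanishes exactly at the vertices with a child: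
if `T` is leafless `f = 0`, while the indicator of a leaf is a nonzero eigenvector, and it lies
in `H^p_0(T) ⊆ H^p(T)` because its level means vanish off one level.
-/

namespace HTree

variable (T : HTree)

def shiftEigenvalues (Mem : (T.V → ℂ) → Prop) : Set ℂ :=
  {z | ∃ f, Mem f ∧ f ≠ 0 ∧ T.S f = fun v => z * f v}

variable {T}

lemma mem_childrenFinset {u v : T.V} :
    u ∈ T.childrenFinset v ↔ u ≠ T.root ∧ T.parent u = v := by
  simp only [childrenFinset, nChildrenFinset, levelFinset, Finset.mem_filter,
    Set.Finite.mem_toFinset, Set.mem_ofPred_eq, Function.iterate_one]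
  constructor
  · rintro ⟨hlevel, rfl⟩
    refine ⟨fun hroot => ?_, rfl⟩
    rw [hroot, T.level_root] at hlevel
    omega
  · rintro ⟨hu, rfl⟩
    exact ⟨(T.level_parent u hu).symm, rfl⟩

lemma numChildren_eq_zero_iff {v : T.V} :
    T.numChildren v = 0 ↔ ∀ u, u ≠ T.root → T.parent u ≠ v := by
  rw [numChildren, numNChildren, ← childrenFinset, Finset.card_eq_zero,
    Finset.eq_empty_iff_forall_notMem]
  simp only [mem_childrenFinset, not_and]

lemma S_apply_of_ne_root (f : T.V → ℂ) {v : T.V} (hv : v ≠ T.root) :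
    T.S f v = f (T.parent v) := if_neg hv

lemma eq_zero_of_S_eq_mul {z : ℂ} (hz : z ≠ 0) {f : T.V → ℂ}
    (hf : T.S f = fun v => z * f v) : f = 0 := by
  suffices h : ∀ n, ∀ v, T.level v = n → f v = 0 from funext fun v => h _ v rfl
  intro n
  induction n with
  | zero =>
    intro v hv
    have hroot := congrFun hf T.root
    rw [T.root_of_level_zero v hv]
    simpa [S, hz] using hroot.symm
  | succ n ih =>
    intro v hv
    have hv_ne : v ≠ T.root := by
      rintro rfl
      rw [T.level_root] at hv
      omega
    have hparent : f (T.parent v) = 0 := ih _ (by have := T.level_parent v hv_ne; omega)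
    have hzv := congrFun hf v
    rw [S_apply_of_ne_root f hv_ne, hparent] at hzv
    exact (mul_eq_zero.mp hzv.symm).resolve_left hz

lemma eq_zero_of_S_eq_zero (hT : ∀ v : T.V, T.numChildren v ≠ 0) {f : T.V → ℂ}
    (hf : T.S f = 0) : f = 0 := by
  funext v
  obtain ⟨u, hu, rfl⟩ : ∃ u, u ≠ T.root ∧ T.parent u = v := by
    simpa [numChildren_eq_zero_iff] using hT v
  simpa [S_apply_of_ne_root f hu] using congrFun hf u

lemma S_single_of_numChildren_eq_zero {w : T.V} (hw : T.numChildren w = 0) (a : ℂ) :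
    T.S (Pi.single w a) = 0 := by
  funext v
  by_cases hv : v = T.root
  · simp [S, hv]
  · rw [S_apply_of_ne_root _ hv, Pi.single_eq_of_ne (numChildren_eq_zero_iff.mp hw v hv)]
    rfl

lemma Mp_single_of_ne_level {p : ℝ} (hp : p ≠ 0) (w : T.V) (a : ℂ) {n : ℕ}
    (hn : n ≠ T.level w) : T.Mp p (Pi.single w a) n = 0 := by
  have hsum : ∑ v ∈ T.levelFinset n, ‖(Pi.single w a : T.V → ℂ) v‖ ^ p = 0 := by
    refine Finset.sum_eq_zero fun v hv => ?_
    have hvw : v ≠ w := by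
      rintro rfl
      exact hn ((T.finite_level n).mem_toFinset.mp hv).symm
    simp [Pi.single_eq_of_ne hvw, Real.zero_rpow hp]
  rw [Mp, Mpp, hsum, mul_zero, Real.zero_rpow (one_div_ne_zero hp)]

lemma memHp0_single {p : ℝ} (hp : p ≠ 0) (w : T.V) (a : ℂ) :
    T.MemHp0 p (Pi.single w a) := by
  refine tendsto_const_nhds.congr' ?_
  filter_upwards [Filter.eventually_gt_atTop (T.level w)] with n hn
  exact (Mp_single_of_ne_level hp w a hn.ne').symm

lemma MemHp0.memHp {p : ℝ} {f : T.V → ℂ} (hf : T.MemHp0 p f) : T.MemHp p f :=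
  let ⟨C, hC⟩ := hf.bddAbove_range
  ⟨C, fun n => hC ⟨n, rfl⟩⟩

lemma shiftEigenvalues_subset_singleton_zero (Mem : (T.V → ℂ) → Prop) :
    T.shiftEigenvalues Mem ⊆ {0} := by
  rintro z ⟨f, -, hf_ne, hf⟩
  by_contra hz
  exact hf_ne (eq_zero_of_S_eq_mul hz hf)

lemma shiftEigenvalues_eq_zero_of_leaf {Mem : (T.V → ℂ) → Prop} {w : T.V}
    (hw : T.numChildren w = 0) (hMem : Mem (Pi.single w 1)) :
    T.shiftEigenvalues Mem = {0} := by
  refine (shiftEigenvalues_subset_singleton_zero Mem).antisymm ?_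
  rintro z rfl
  refine ⟨Pi.single w 1, hMem, fun h => by simpa using congrFun h w, ?_⟩
  rw [S_single_of_numChildren_eq_zero hw]
  exact funext fun v => (zero_mul _).symm

lemma shiftEigenvalues_eq_empty (hT : ∀ v : T.V, T.numChildren v ≠ 0)
    (Mem : (T.V → ℂ) → Prop) : T.shiftEigenvalues Mem = ∅ := by
  refine Set.eq_empty_of_forall_notMem fun z hz => ?_
  obtain rfl := shiftEigenvalues_subset_singleton_zero Mem hz
  obtain ⟨f, -, hf_ne, hf⟩ := hz
  exact hf_ne (eq_zero_of_S_eq_zero hT (hf.trans (funext fun v => zero_mul _)))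

end HTree

/-- the point spectrum of the forward shift is `{0}` if `T` has a leaf
and empty if `T` is leafless, both on `H^p(T)` and on `H^p_0(T)`. -/
theorem forward_shift_point_spectrum (T : HTree) (p : ℝ) (hp : 1 ≤ p) :
    ((∃ v : T.V, T.numChildren v = 0) →
      ({z : ℂ | ∃ f, T.MemHp p f ∧ f ≠ 0 ∧ T.S f = fun v => z * f v} = {0} ∧
       {z : ℂ | ∃ f, T.MemHp0 p f ∧ f ≠ 0 ∧ T.S f = fun v => z * f v} = {0})) ∧
    ((∀ v : T.V, T.numChildren v ≠ 0) →
      ({z : ℂ | ∃ f, T.MemHp p f ∧ f ≠ 0 ∧ T.S f = fun v => z * f v} = ∅ ∧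
       {z : ℂ | ∃ f, T.MemHp0 p f ∧ f ≠ 0 ∧ T.S f = fun v => z * f v} = ∅))  := by
  have hp0 : p ≠ 0 := by positivity
  refine ⟨fun ⟨w, hw⟩ => ?_, fun hT => ?_⟩
  · have hsingle := HTree.memHp0_single (T := T) hp0 w 1
    exact ⟨HTree.shiftEigenvalues_eq_zero_of_leaf hw hsingle.memHp,
      HTree.shiftEigenvalues_eq_zero_of_leaf hw hsingle⟩
  · exact ⟨HTree.shiftEigenvalues_eq_empty hT _, HTree.shiftEigenvalues_eq_empty hT _⟩
end

section
/- Let (a_n) be defined by a_0 = 1 and a_{n+1} = ⌈3a_n/2⌉. Then for each fixed m ≥ 1, a_{n−m}/a_n ≤ (2/3)^m for all n ≥ m and lim_{n→∞} a_{n−m}/a_n = (2/3)^m. -/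
open scoped BigOperators
open Classical

/-!
Since `3 aₙ / 2 ≤ aₙ₊₁ < 3 aₙ / 2 + 1`, the sequence `aₙ` grows by a factor of at least `3/2`
per step while `aₙ + 1` grows by a factor of at most `3/2`. Iterating over `m` steps,
`(2/3)^m - 1/aₙ ≤ aₙ₋ₘ/aₙ ≤ (2/3)^m`, and `aₙ → ∞` squeezes the ratio to `(2/3)^m`.
-/

open Filter

theorem pow_mul_le_pow_mul_add {f : ℕ → ℕ} {p q : ℕ} (h : ∀ n, p * f n ≤ q * f (n + 1))
    (k n : ℕ) : p ^ k * f n ≤ q ^ k * f (n + k) := by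
  induction k with
  | zero => simp
  | succ k ih =>
    calc p ^ (k + 1) * f n = p * (p ^ k * f n) := by ring
      _ ≤ p * (q ^ k * f (n + k)) := Nat.mul_le_mul_left _ ih
      _ = q ^ k * (p * f (n + k)) := by ring
      _ ≤ q ^ k * (q * f (n + k + 1)) := Nat.mul_le_mul_left _ (h _)
      _ = q ^ (k + 1) * f (n + (k + 1)) := by rw [← add_assoc]; ring

theorem pow_mul_add_le_pow_mul {f : ℕ → ℕ} {p q : ℕ} (h : ∀ n, p * f (n + 1) ≤ q * f n)
    (k n : ℕ) : p ^ k * f (n + k) ≤ q ^ k * f n := by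
  induction k with
  | zero => simp
  | succ k ih =>
    calc p ^ (k + 1) * f (n + (k + 1)) = p ^ k * (p * f (n + k + 1)) := by rw [← add_assoc]; ring
      _ ≤ p ^ k * (q * f (n + k)) := Nat.mul_le_mul_left _ (h _)
      _ = q * (p ^ k * f (n + k)) := by ring
      _ ≤ q * (q ^ k * f n) := Nat.mul_le_mul_left _ ih
      _ = q ^ (k + 1) * f n := by ring

namespace CeilSequence

variable {a : ℕ → ℕ} (hrec : ∀ n : ℕ, a (n + 1) = ⌈(3 * (a n : ℚ)) / 2⌉₊)
include hrec

theorem three_mul_le_two_mul_succ (n : ℕ) : 3 * a n ≤ 2 * a (n + 1) := by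
  have h := Nat.le_ceil (3 * (a n : ℚ) / 2)
  rw [← hrec] at h
  have : (3 * a n : ℚ) ≤ 2 * a (n + 1) := by linarith
  exact_mod_cast this

theorem two_mul_succ_add_one_le (n : ℕ) : 2 * (a (n + 1) + 1) ≤ 3 * (a n + 1) := by
  have h := Nat.ceil_lt_add_one (show (0 : ℚ) ≤ 3 * a n / 2 by positivity)
  rw [← hrec] at h
  have : (2 * a (n + 1) : ℚ) < 3 * a n + 2 := by linarith
  have : 2 * a (n + 1) < 3 * a n + 2 := by exact_mod_cast this
  omega

theorem add_le_of_pos (h0 : 0 < a 0) (n : ℕ) : n + a 0 ≤ a n := by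
  induction n with
  | zero => simp
  | succ k ih =>
    have := three_mul_le_two_mul_succ hrec k
    omega

theorem pos (h0 : 0 < a 0) (n : ℕ) : 0 < a n :=
  h0.trans_le ((Nat.le_add_left _ n).trans (add_le_of_pos hrec h0 n))

theorem tendsto_atTop (h0 : 0 < a 0) : Tendsto (fun n => (a n : ℝ)) atTop atTop :=
  tendsto_atTop_mono (fun n => by exact_mod_cast (add_le_of_pos hrec h0 n).trans' (by omega))
    tendsto_natCast_atTop_atTop

theorem div_le_pow (h0 : 0 < a 0) (n m : ℕ) :
    (a n : ℝ) / a (n + m) ≤ (2 / 3 : ℝ) ^ m := by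
  have hpos : (0 : ℝ) < a (n + m) := by exact_mod_cast pos hrec h0 _
  have key : (3 ^ m * a n : ℝ) ≤ 2 ^ m * a (n + m) := by
    exact_mod_cast pow_mul_le_pow_mul_add (three_mul_le_two_mul_succ hrec) m n
  rw [div_le_iff₀ hpos, div_pow, div_mul_eq_mul_div, le_div_iff₀ (by positivity)]
  linarith

theorem pow_sub_inv_le_div (h0 : 0 < a 0) (n m : ℕ) :
    (2 / 3 : ℝ) ^ m - 1 / a (n + m) ≤ (a n : ℝ) / a (n + m) := by
  have hpos : (0 : ℝ) < a (n + m) := by exact_mod_cast pos hrec h0 _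
  have key : (2 ^ m * (a (n + m) + 1) : ℝ) ≤ 3 ^ m * (a n + 1) := by
    exact_mod_cast pow_mul_add_le_pow_mul (f := fun n => a n + 1)
      (two_mul_succ_add_one_le hrec) m n
  rw [div_pow, sub_le_iff_le_add, ← add_div, le_div_iff₀ hpos, div_mul_eq_mul_div,
    div_le_iff₀ (by positivity)]
  linarith [pow_pos (show (0 : ℝ) < 2 by norm_num) m]

end CeilSequence

theorem ceil_sequence_ratio_general (a : ℕ → ℕ) (h0 : a 0 = 1)
    (hrec : ∀ n : ℕ, a (n + 1) = ⌈(3 * (a n : ℚ)) / 2⌉₊)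
    (m : ℕ) :
    (∀ n : ℕ, m ≤ n → (a (n - m) : ℝ) / (a n : ℝ) ≤ (2 / 3 : ℝ) ^ m) ∧
    Filter.Tendsto (fun n : ℕ => (a (n - m) : ℝ) / (a n : ℝ)) Filter.atTop
      (nhds ((2 / 3 : ℝ) ^ m)) := by
  have hpos : 0 < a 0 := h0 ▸ one_pos
  have upper (n : ℕ) (hn : m ≤ n) : (a (n - m) : ℝ) / a n ≤ (2 / 3 : ℝ) ^ m := by
    obtain ⟨k, rfl⟩ := Nat.exists_eq_add_of_le' hn
    simpa using CeilSequence.div_le_pow hrec hpos k m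
  have lower (n : ℕ) (hn : m ≤ n) : (2 / 3 : ℝ) ^ m - 1 / a n ≤ (a (n - m) : ℝ) / a n := by
    obtain ⟨k, rfl⟩ := Nat.exists_eq_add_of_le' hn
    simpa using CeilSequence.pow_sub_inv_le_div hrec hpos k m
  have lower_tendsto : Tendsto (fun n => (2 / 3 : ℝ) ^ m - 1 / a n) atTop (nhds ((2 / 3) ^ m)) := by
    simpa using tendsto_const_nhds.sub (CeilSequence.tendsto_atTop hrec hpos).inv_tendsto_atTop
  exact ⟨upper, tendsto_of_tendsto_of_tendsto_of_le_of_le' lower_tendsto tendsto_const_nhds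
    (eventually_atTop.mpr ⟨m, lower⟩) (eventually_atTop.mpr ⟨m, upper⟩)⟩

/-- for the sequence `a_0 = 1`, `a_{n+1} = ⌈3a_n/2⌉`, for each fixed
`m ≥ 1` one has `a_{n−m}/a_n ≤ (2/3)^m` for all `n ≥ m`, with limit `(2/3)^m`. -/
theorem ceil_sequence_ratio (a : ℕ → ℕ) (h0 : a 0 = 1)
    (hrec : ∀ n : ℕ, a (n + 1) = ⌈(3 * (a n : ℚ)) / 2⌉₊)
    (m : ℕ) (hm : 1 ≤ m) :
    (∀ n : ℕ, m ≤ n → (a (n - m) : ℝ) / (a n : ℝ) ≤ (2 / 3 : ℝ) ^ m) ∧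
    Filter.Tendsto (fun n : ℕ => (a (n - m) : ℝ) / (a n : ℝ)) Filter.atTop
      (nhds ((2 / 3 : ℝ) ^ m)) :=
  ceil_sequence_ratio_general a h0 hrec m
end
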